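/- arXiv:2102.08855 — 2 statements merged into one kernel-verified Lean document; each statement's English description precedes it below -/
import Mathlib

section
/- Suppose X is a real symmetric matrix such that the block matrix [[−AᵀX − XA, Cᵀ − XB],[C − BᵀX, D + Dᵀ]] factors as [[Mᵀ],[Nᵀ]]·[M, N] for some real matrices M, N. Then along any solution of ẋ = Ax + Bu, y = Cx + Du, one has (1/2)x(t0)ᵀXx(t0) − (1/2)x(t1)ᵀXx(t1) = −∫_{t0}^{t1} u(t)ᵀy(t) dt + (1/2)∫_{t0}^{t1} ‖Mx(t) + Nu(t)‖² dt. -/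
open MeasureTheory Matrix

/-! Evaluating the quadratic form of the factored block matrix at `(x, u)` gives, pointwise in
time, `d/dt (xᵀXx) = 2 uᵀy - ‖Mx + Nu‖²`; the identity is this rate integrated from `t0` to `t1`
by the fundamental theorem of calculus. Symmetry of `X` is what lets the two cross terms
`(Bu)ᵀXx` and `xᵀXBu` of the derivative both be matched with the off-diagonal block. -/

namespace Matrix

variable {R ι κ ν : Type*} [CommRing R] [Fintype ι] [Fintype κ] [Fintype ν]

theorem mulVec_dotProduct_mulVec (P : Matrix ν ι R) (Q : Matrix ν κ R) (a : ι → R) (b : κ → R) :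
    P *ᵥ a ⬝ᵥ Q *ᵥ b = a ⬝ᵥ (Pᵀ * Q) *ᵥ b := by
  rw [← mulVec_mulVec, dotProduct_mulVec a, vecMul_transpose]

theorem IsSymm.dotProduct_mulVec_comm {X : Matrix ι ι R} (hX : X.IsSymm) (a b : ι → R) :
    a ⬝ᵥ X *ᵥ b = b ⬝ᵥ X *ᵥ a := by
  rw [← dotProduct_transpose_mulVec, hX.eq]

end Matrix

section Deriv

variable {𝕜 ι κ : Type*} [NontriviallyNormedField 𝕜] [Fintype ι] {f g : 𝕜 → ι → 𝕜}
  {f' g' : ι → 𝕜} {t : 𝕜}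

theorem HasDerivAt.dotProduct (hf : HasDerivAt f f' t) (hg : HasDerivAt g g' t) :
    HasDerivAt (fun s => f s ⬝ᵥ g s) (f' ⬝ᵥ g t + f t ⬝ᵥ g') t := by
  simp only [_root_.dotProduct, ← Finset.sum_add_distrib]
  exact HasDerivAt.fun_sum fun i _ => (hasDerivAt_pi.1 hf i).mul (hasDerivAt_pi.1 hg i)

theorem HasDerivAt.matrix_mulVec (P : Matrix κ ι 𝕜) (hf : HasDerivAt f f' t) :
    HasDerivAt (fun s => P *ᵥ f s) (P *ᵥ f') t :=
  hasDerivAt_pi.2 fun i => by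
    show HasDerivAt (fun s => P i ⬝ᵥ f s) (P i ⬝ᵥ f') t
    simpa only [zero_dotProduct, zero_add] using (hasDerivAt_const t (P i)).dotProduct hf

end Deriv

theorem lmi_dissipation_rate {R ι κ μ : Type*} [CommRing R] [Fintype ι] [Fintype κ] [Fintype μ]
    {A : Matrix ι ι R} {B : Matrix ι κ R} {C : Matrix κ ι R} {D : Matrix κ κ R}
    {X : Matrix ι ι R} (hX : X.IsSymm) {M : Matrix μ ι R} {N : Matrix μ κ R}
    (hMM : -(Aᵀ * X) - X * A = Mᵀ * M) (hMN : Cᵀ - X * B = Mᵀ * N) (hNN : D + Dᵀ = Nᵀ * N)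
    (v : ι → R) (w : κ → R) :
    (A *ᵥ v + B *ᵥ w) ⬝ᵥ X *ᵥ v + v ⬝ᵥ X *ᵥ (A *ᵥ v + B *ᵥ w) =
      2 * (w ⬝ᵥ (C *ᵥ v + D *ᵥ w)) - (M *ᵥ v + N *ᵥ w) ⬝ᵥ (M *ᵥ v + N *ᵥ w) := by
  have hstate : M *ᵥ v ⬝ᵥ M *ᵥ v = -(2 * (v ⬝ᵥ X *ᵥ A *ᵥ v)) := by
    rw [mulVec_dotProduct_mulVec, ← hMM, sub_mulVec, neg_mulVec, dotProduct_sub, dotProduct_neg,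
      ← mulVec_mulVec, ← mulVec_mulVec, dotProduct_transpose_mulVec, dotProduct_comm,
      hX.dotProduct_mulVec_comm]
    ring
  have hcross : M *ᵥ v ⬝ᵥ N *ᵥ w = w ⬝ᵥ C *ᵥ v - v ⬝ᵥ X *ᵥ B *ᵥ w := by
    rw [mulVec_dotProduct_mulVec, ← hMN, sub_mulVec, dotProduct_sub, ← mulVec_mulVec,
      dotProduct_transpose_mulVec]
  have hinput : N *ᵥ w ⬝ᵥ N *ᵥ w = 2 * (w ⬝ᵥ D *ᵥ w) := by
    rw [mulVec_dotProduct_mulVec, ← hNN, add_mulVec, dotProduct_add, dotProduct_transpose_mulVec]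
    ring
  rw [hX.dotProduct_mulVec_comm (A *ᵥ v + B *ᵥ w)]
  simp only [add_dotProduct, dotProduct_add, mulVec_add]
  rw [dotProduct_comm (N *ᵥ w) (M *ᵥ v)]
  linear_combination hstate + 2 * hcross + hinput

/-- If the LMI matrix factors via `M, N`, then the integral dissipation identity holds
along all solutions of `ẋ = Ax + Bu`, `y = Cx + Du`. -/
theorem dissipation_rate_identity {n m k : ℕ}
    (A : Matrix (Fin n) (Fin n) ℝ) (B : Matrix (Fin n) (Fin m) ℝ)
    (C : Matrix (Fin m) (Fin n) ℝ) (D : Matrix (Fin m) (Fin m) ℝ)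
    (X : Matrix (Fin n) (Fin n) ℝ) (hX : X.IsSymm)
    (M : Matrix (Fin k) (Fin n) ℝ) (N : Matrix (Fin k) (Fin m) ℝ)
    (hMM : -(Aᵀ * X) - X * A = Mᵀ * M)
    (hMN : Cᵀ - X * B = Mᵀ * N)
    (hNN : D + Dᵀ = Nᵀ * N)
    (x : ℝ → (Fin n → ℝ)) (u : ℝ → (Fin m → ℝ)) (y : ℝ → (Fin m → ℝ))
    (hu : Continuous u)
    (hx : ∀ t, HasDerivAt x (A.mulVec (x t) + B.mulVec (u t)) t)
    (hy : ∀ t, y t = C.mulVec (x t) + D.mulVec (u t)) :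
    ∀ t0 t1 : ℝ, t0 ≤ t1 →
      (1 / 2) * (x t0 ⬝ᵥ X.mulVec (x t0)) - (1 / 2) * (x t1 ⬝ᵥ X.mulVec (x t1)) =
        -(∫ t in t0..t1, u t ⬝ᵥ y t) +
          (1 / 2) * ∫ t in t0..t1,
            (M.mulVec (x t) + N.mulVec (u t)) ⬝ᵥ (M.mulVec (x t) + N.mulVec (u t)) := by
  intro t0 t1 _
  simp only [hy]
  have hxc : Continuous x := continuous_iff_continuousAt.2 fun t => (hx t).continuousAt
  have hsupply : Continuous fun t => u t ⬝ᵥ (C *ᵥ x t + D *ᵥ u t) := by fun_prop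
  have hloss : Continuous fun t => (M *ᵥ x t + N *ᵥ u t) ⬝ᵥ (M *ᵥ x t + N *ᵥ u t) := by fun_prop
  have hstorage (t : ℝ) : HasDerivAt (fun s => x s ⬝ᵥ X *ᵥ x s)
      (2 * (u t ⬝ᵥ (C *ᵥ x t + D *ᵥ u t))
        - (M *ᵥ x t + N *ᵥ u t) ⬝ᵥ (M *ᵥ x t + N *ᵥ u t)) t := by
    rw [← lmi_dissipation_rate hX hMM hMN hNN]
    exact (hx t).dotProduct ((hx t).matrix_mulVec X)
  have hftc := intervalIntegral.integral_eq_sub_of_hasDerivAt (fun t _ => hstorage t)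
    (((hsupply.intervalIntegrable t0 t1).const_mul 2).sub (hloss.intervalIntegrable t0 t1))
  rw [intervalIntegral.integral_sub ((hsupply.intervalIntegrable t0 t1).const_mul 2)
    (hloss.intervalIntegrable t0 t1), intervalIntegral.integral_const_mul] at hftc
  linarith
end

section
/- If G(s) = D + C(sI − A)^{-1}B where A has all eigenvalues in the open left-half plane and there exists X = Xᵀ ≥ 0 with [[−AᵀX − XA, Cᵀ − XB],[C − BᵀX, D + Dᵀ]] ⪰ 0, then for every λ in the open right-half plane, G(λ) + G(λ)* ⪰ 0 (G is positive-real). -/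
/-!
With `Φ = (λ - A)⁻¹ B` we have `A Φ = λ Φ - B`, and substituting this into the LMI tested against
`K = [Φ; 1]` gives `G(λ) + G(λ)ᴴ = Kᴴ L K + 2 Re λ • Φᴴ X Φ`, a sum of two positive semidefinite
matrices.
-/

open Matrix
open scoped ComplexOrder

namespace Matrix

theorem PosSemidef.map_ofReal {ι : Type*} [Fintype ι] {M : Matrix ι ι ℝ} (hM : M.PosSemidef) :
    (M.map Complex.ofReal).PosSemidef := by
  obtain ⟨r, v, rfl⟩ := posSemidef_iff_eq_sum_vecMulVec.mp hM
  refine posSemidef_iff_eq_sum_vecMulVec.mpr ⟨r, fun i j => (v i j : ℂ), ?_⟩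
  ext a b
  simp [vecMulVec_apply, sum_apply]

theorem conjTranspose_map_ofReal {ι κ : Type*} (M : Matrix ι κ ℝ) :
    (M.map Complex.ofReal)ᴴ = Mᵀ.map Complex.ofReal := by
  rw [← conjTranspose_map _ fun _ => by simp, conjTranspose_eq_transpose_of_trivial]

theorem map_ofReal_mul {ι κ ν : Type*} [Fintype κ] (M : Matrix ι κ ℝ) (N : Matrix κ ν ℝ) :
    (M * N).map Complex.ofReal = M.map Complex.ofReal * N.map Complex.ofReal :=
  Matrix.map_mul (f := Complex.ofRealHom)

variable {ι κ : Type*} [Fintype ι] [Fintype κ] [DecidableEq ι] [DecidableEq κ]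

theorem add_conjTranspose_eq_of_mul_eq {R : Type*} [CommRing R] [StarRing R]
    {A X : Matrix ι ι R} {B Φ : Matrix ι κ R} {C : Matrix κ ι R} {D : Matrix κ κ R} {l : R}
    (hΦ : (l • 1 - A) * Φ = B) :
    (D + C * Φ) + (D + C * Φ)ᴴ =
      (fromRows Φ (1 : Matrix κ κ R))ᴴ *
          fromBlocks (-(Aᴴ * X) - X * A) (Cᴴ - X * B) (C - Bᴴ * X) (D + Dᴴ) *
          fromRows Φ (1 : Matrix κ κ R) + (l + star l) • (Φᴴ * X * Φ) := by
  have hAΦ : A * Φ = l • Φ - B := by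
    rw [← hΦ, Matrix.sub_mul, Matrix.smul_mul, Matrix.one_mul, sub_sub_cancel]
  have hΦA : Φᴴ * Aᴴ = star l • Φᴴ - Bᴴ := by
    rw [← conjTranspose_mul, hAΦ, conjTranspose_sub, conjTranspose_smul]
  have hAX : Φᴴ * (Aᴴ * X) * Φ = star l • (Φᴴ * X * Φ) - Bᴴ * X * Φ := by
    rw [← Matrix.mul_assoc, hΦA, Matrix.sub_mul, Matrix.sub_mul, Matrix.smul_mul, Matrix.smul_mul]
  have hXA : Φᴴ * (X * A) * Φ = l • (Φᴴ * X * Φ) - Φᴴ * X * B := by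
    rw [Matrix.mul_assoc, Matrix.mul_assoc, hAΦ]
    simp only [Matrix.mul_sub, Matrix.mul_smul, Matrix.mul_assoc]
  have hblock : Φᴴ * (-(Aᴴ * X) - X * A) * Φ =
      Bᴴ * X * Φ + Φᴴ * X * B - (l + star l) • (Φᴴ * X * Φ) := by
    rw [Matrix.mul_sub, Matrix.sub_mul, Matrix.mul_neg, Matrix.neg_mul, hAX, hXA, add_smul]
    abel
  rw [conjTranspose_fromRows_eq_fromCols_conjTranspose, fromCols_mul_fromBlocks,
    fromCols_mul_fromRows, Matrix.add_mul, hblock]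
  simp only [conjTranspose_one, Matrix.one_mul, Matrix.mul_one, conjTranspose_add,
    conjTranspose_mul, Matrix.mul_sub, Matrix.sub_mul, Matrix.mul_assoc]
  abel

theorem posSemidef_add_conjTranspose_of_lmi {𝕜 : Type*} [RCLike 𝕜]
    {A X : Matrix ι ι 𝕜} {B Φ : Matrix ι κ 𝕜} {C : Matrix κ ι 𝕜} {D : Matrix κ κ 𝕜} {l : 𝕜}
    (hX : X.PosSemidef)
    (hLMI : (fromBlocks (-(Aᴴ * X) - X * A) (Cᴴ - X * B) (C - Bᴴ * X) (D + Dᴴ)).PosSemidef)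
    (hl : 0 ≤ RCLike.re l) (hΦ : (l • 1 - A) * Φ = B) :
    ((D + C * Φ) + (D + C * Φ)ᴴ).PosSemidef := by
  have hl' : 0 ≤ l + star l := by
    rw [RCLike.star_def, RCLike.add_conj]
    exact mul_nonneg zero_le_two (RCLike.ofReal_nonneg.mpr hl)
  rw [add_conjTranspose_eq_of_mul_eq (X := X) hΦ]
  exact (hLMI.conjTranspose_mul_mul_same _).add ((hX.conjTranspose_mul_mul_same Φ).smul hl')

end Matrix

theorem lmi_implies_positive_real_general {n m : ℕ}
    (A : Matrix (Fin n) (Fin n) ℝ) (B : Matrix (Fin n) (Fin m) ℝ)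
    (C : Matrix (Fin m) (Fin n) ℝ) (D : Matrix (Fin m) (Fin m) ℝ)
    (hHurwitz : ∀ μ ∈ spectrum ℂ (A.map Complex.ofReal), μ.re < 0)
    (X : Matrix (Fin n) (Fin n) ℝ) (hXpsd : X.PosSemidef)
    (hLMI : (fromBlocks (-(Aᵀ * X) - X * A) (Cᵀ - X * B) (C - Bᵀ * X) (D + Dᵀ)).PosSemidef) :
    ∀ l : ℂ, 0 < l.re →
      ((D.map Complex.ofReal +
          C.map Complex.ofReal * (l • (1 : Matrix (Fin n) (Fin n) ℂ) - A.map Complex.ofReal)⁻¹ *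
            B.map Complex.ofReal) +
        (D.map Complex.ofReal +
          C.map Complex.ofReal * (l • (1 : Matrix (Fin n) (Fin n) ℂ) - A.map Complex.ofReal)⁻¹ *
            B.map Complex.ofReal)ᴴ).PosSemidef := by
  intro l hl
  have hl_spectrum : l ∉ spectrum ℂ (A.map Complex.ofReal) := fun h => (hHurwitz l h).not_gt hl
  have hunit : IsUnit (l • (1 : Matrix (Fin n) (Fin n) ℂ) - A.map Complex.ofReal) := by
    rwa [spectrum.mem_iff, not_not, Algebra.algebraMap_eq_smul_one] at hl_spectrum
  have hΦ := mul_nonsing_inv_cancel_left _ (B.map Complex.ofReal)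
    ((isUnit_iff_isUnit_det _).mp hunit)
  have hLMIc := hLMI.map_ofReal
  simp only [fromBlocks_map, Matrix.map_sub _ Complex.ofReal_sub,
    Matrix.map_neg _ Complex.ofReal_neg, Matrix.map_add _ Complex.ofReal_add, map_ofReal_mul,
    ← conjTranspose_map_ofReal] at hLMIc
  rw [Matrix.mul_assoc]
  exact posSemidef_add_conjTranspose_of_lmi hXpsd.map_ofReal hLMIc hl.le hΦ

/-- Positive-real lemma direction: if `A` is Hurwitz and there exists `X = Xᵀ ⪰ 0` with
the LMI block matrix PSD, then `G(λ) = D + C(λI − A)⁻¹B` satisfies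
`G(λ) + G(λ)* ⪰ 0` for all `λ` in the open right-half plane. -/
theorem lmi_implies_positive_real {n m : ℕ}
    (A : Matrix (Fin n) (Fin n) ℝ) (B : Matrix (Fin n) (Fin m) ℝ)
    (C : Matrix (Fin m) (Fin n) ℝ) (D : Matrix (Fin m) (Fin m) ℝ)
    (hHurwitz : ∀ μ ∈ spectrum ℂ (A.map Complex.ofReal), μ.re < 0)
    (X : Matrix (Fin n) (Fin n) ℝ) (hXsymm : X.IsSymm) (hXpsd : X.PosSemidef)
    (hLMI : (fromBlocks (-(Aᵀ * X) - X * A) (Cᵀ - X * B) (C - Bᵀ * X) (D + Dᵀ)).PosSemidef) :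
    ∀ l : ℂ, 0 < l.re →
      ((D.map Complex.ofReal +
          C.map Complex.ofReal * (l • (1 : Matrix (Fin n) (Fin n) ℂ) - A.map Complex.ofReal)⁻¹ *
            B.map Complex.ofReal) +
        (D.map Complex.ofReal +
          C.map Complex.ofReal * (l • (1 : Matrix (Fin n) (Fin n) ℂ) - A.map Complex.ofReal)⁻¹ *
            B.map Complex.ofReal)ᴴ).PosSemidef :=
  lmi_implies_positive_real_general A B C D hHurwitz X hXpsd hLMI
end
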